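/- Let d ≥ 1 be an integer, α ∈ (0,2) and p ∈ (d/(d+α), 1+α/d). Then for every t > 0: ∫₀^t ∫_{ℝ^d} g(s,y)^p dy ds = (κ_{d,α}^p·π^{d/2}/(1−(p−1)d/α))·(Γ(p(d+α)/2 − d/2)/Γ(p(d+α)/2))·t^{1−(p−1)d/α}. -/

import Mathlib

open MeasureTheory Real

/-- `κ_{d,α} = Γ((d+α)/2)/(π^{d/2} Γ(α/2))`. -/
noncomputable def kappaD (d : ℕ) (α : ℝ) : ℝ :=
  Real.Gamma (((d:ℝ) + α) / 2) / (Real.pi ^ ((d:ℝ) / 2) * Real.Gamma (α / 2))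

/-- `g(t,x) = κ_{d,α} t / (t^{2/α} + |x|²)^{(d+α)/2}`. -/
noncomputable def gKer (d : ℕ) (α : ℝ) (t : ℝ) (x : EuclideanSpace ℝ (Fin d)) : ℝ :=
  kappaD d α * t / (t ^ (2/α) + ‖x‖ ^ 2) ^ (((d:ℝ) + α) / 2)

/-!
The space integral is evaluated by subordination. In an `n`-dimensional inner product space, for
`a > 0` and `σ > n/2`, `Γ(σ) (a + |x|²)^{-σ} = ∫₀^∞ u^{σ-1} e^{-(a+|x|²)u} du`; after exchanging
the integrals, the Gaussian integral in `x` contributes `(π/u)^{n/2}` and leaves a Gamma integral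
in `u`: `∫ (a + |x|²)^{-σ} dx = π^{n/2} Γ(σ - n/2) / Γ(σ) · a^{n/2-σ}`.
With `a = s^{2/α}` and `σ = p(d+α)/2` (so `σ > d/2` iff `p > d/(d+α)`), the space integral of
`g(s,·)^p` is a constant times `s^{-(p-1)d/α}`, which is integrable at `0` iff `p < 1 + α/d`.
-/

open Set Module

section

variable {V : Type*} [NormedAddCommGroup V] [InnerProductSpace ℝ V] [FiniteDimensional ℝ V]
  [MeasurableSpace V] [BorelSpace V]

lemma integral_rpow_mul_exp_neg_add_norm_sq_mul (a s : ℝ) {u : ℝ} (hu : 0 < u) :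
    ∫ x : V, u ^ (s - 1) * exp (-((a + ‖x‖ ^ 2) * u))
      = π ^ (finrank ℝ V / 2 : ℝ) * (u ^ (s - finrank ℝ V / 2 - 1) * exp (-(a * u))) := by
  have hsplit : ∀ x : V, u ^ (s - 1) * exp (-((a + ‖x‖ ^ 2) * u))
      = u ^ (s - 1) * exp (-(a * u)) * exp (-u * ‖x‖ ^ 2) := fun x => by
    rw [mul_assoc, ← exp_add]
    ring_nf
  simp_rw [hsplit, integral_const_mul, GaussianFourier.integral_rexp_neg_mul_sq_norm hu,
    div_rpow pi_pos.le hu.le, sub_right_comm s, rpow_sub hu]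
  ring

lemma integrable_uncurry_rpow_mul_exp_neg_add_norm_sq_mul {a s : ℝ} (ha : 0 < a)
    (hs : finrank ℝ V / 2 < s) :
    Integrable
      (Function.uncurry fun (u : ℝ) (x : V) => u ^ (s - 1) * exp (-((a + ‖x‖ ^ 2) * u)))
      ((volume.restrict (Ioi 0)).prod volume) := by
  have hm : 0 < s - finrank ℝ V / 2 := by linarith
  -- A non-integrable function has Bochner integral `0`, so computing a nonzero value suffices.
  have hradial : IntegrableOn (fun u : ℝ => u ^ (s - finrank ℝ V / 2 - 1) * exp (-(a * u)))
      (Ioi 0) :=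
    .of_integral_ne_zero (by rw [integral_rpow_mul_exp_neg_mul_Ioi hm ha]; positivity)
  refine (integrable_prod_iff (by fun_prop)).2 ⟨?_, ?_⟩
  · filter_upwards [ae_restrict_mem measurableSet_Ioi] with u (hu : 0 < u)
    refine .of_integral_ne_zero ?_
    rw [Function.uncurry_def, integral_rpow_mul_exp_neg_add_norm_sq_mul a s hu]
    positivity
  · refine (hradial.const_mul (π ^ (finrank ℝ V / 2 : ℝ))).congr ?_
    filter_upwards [ae_restrict_mem measurableSet_Ioi] with u (hu : 0 < u)
    simp_rw [Function.uncurry_apply_pair,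
      norm_of_nonneg (by positivity : 0 ≤ u ^ (s - 1) * exp _),
      integral_rpow_mul_exp_neg_add_norm_sq_mul a s hu]

theorem integral_rpow_neg_add_norm_sq {a s : ℝ} (ha : 0 < a) (hs : finrank ℝ V / 2 < s) :
    ∫ x : V, (a + ‖x‖ ^ 2) ^ (-s)
      = π ^ (finrank ℝ V / 2 : ℝ) * Gamma (s - finrank ℝ V / 2) / Gamma s *
          a ^ (finrank ℝ V / 2 - s) := by
  have hs0 : 0 < s := lt_of_le_of_lt (by positivity) hs
  have hm : 0 < s - finrank ℝ V / 2 := by linarith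
  have hGamma : ∀ x : V, ∫ u in Ioi 0, u ^ (s - 1) * exp (-((a + ‖x‖ ^ 2) * u))
      = Gamma s * (a + ‖x‖ ^ 2) ^ (-s) := fun x => by
    rw [integral_rpow_mul_exp_neg_mul_Ioi hs0 (by positivity), one_div,
      inv_rpow (by positivity), ← rpow_neg (by positivity), mul_comm]
  rw [mul_comm, ← mul_div_assoc, eq_div_iff (Gamma_pos_of_pos hs0).ne', mul_comm]
  calc Gamma s * ∫ x : V, (a + ‖x‖ ^ 2) ^ (-s)
      = ∫ x : V, ∫ u in Ioi 0, u ^ (s - 1) * exp (-((a + ‖x‖ ^ 2) * u)) := by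
        simp_rw [hGamma, integral_const_mul]
    _ = ∫ u in Ioi 0, ∫ x : V, u ^ (s - 1) * exp (-((a + ‖x‖ ^ 2) * u)) :=
        (integral_integral_swap (integrable_uncurry_rpow_mul_exp_neg_add_norm_sq_mul ha hs)).symm
    _ = ∫ u in Ioi 0, π ^ (finrank ℝ V / 2 : ℝ) *
          (u ^ (s - finrank ℝ V / 2 - 1) * exp (-(a * u))) :=
        setIntegral_congr_fun measurableSet_Ioi
          fun u hu => integral_rpow_mul_exp_neg_add_norm_sq_mul a s hu
    _ = a ^ (finrank ℝ V / 2 - s) *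
          (π ^ (finrank ℝ V / 2 : ℝ) * Gamma (s - finrank ℝ V / 2)) := by
        rw [integral_const_mul, integral_rpow_mul_exp_neg_mul_Ioi hm ha, one_div,
          inv_rpow ha.le, ← rpow_neg ha.le, neg_sub]
        ring

end

lemma kappaD_pos (d : ℕ) {α : ℝ} (hα : 0 < α) : 0 < kappaD d α := by
  unfold kappaD
  positivity

lemma gKer_rpow (d : ℕ) {α s : ℝ} (hα : 0 < α) (hs : 0 < s) (p : ℝ)
    (y : EuclideanSpace ℝ (Fin d)) :
    gKer d α s y ^ p
      = (kappaD d α * s) ^ p * (s ^ (2 / α) + ‖y‖ ^ 2) ^ (-(p * ((d : ℝ) + α) / 2)) := by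
  have hκ := kappaD_pos d hα
  have hden : 0 < s ^ (2 / α) + ‖y‖ ^ 2 := by positivity
  rw [gKer, div_rpow (by positivity) (by positivity), ← rpow_mul hden.le, div_eq_mul_inv,
    ← rpow_neg hden.le]
  ring_nf

theorem integral_gKer_rpow (d : ℕ) {α p s : ℝ} (hα : 0 < α) (hp : (d : ℝ) / (d + α) < p)
    (hs : 0 < s) :
    ∫ y : EuclideanSpace ℝ (Fin d), gKer d α s y ^ p
      = kappaD d α ^ p * π ^ ((d : ℝ) / 2) *
          (Gamma (p * ((d : ℝ) + α) / 2 - d / 2) / Gamma (p * ((d : ℝ) + α) / 2)) *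
          s ^ (-((p - 1) * d / α)) := by
  have hdα : (0 : ℝ) < d + α := by positivity
  have hσ : (finrank ℝ (EuclideanSpace ℝ (Fin d)) : ℝ) / 2 < p * ((d : ℝ) + α) / 2 := by
    rw [finrank_euclideanSpace_fin]
    linarith [(div_lt_iff₀ hdα).1 hp]
  simp_rw [gKer_rpow d hα hs, integral_const_mul,
    integral_rpow_neg_add_norm_sq (rpow_pos_of_pos hs _) hσ, finrank_euclideanSpace_fin,
    mul_rpow (kappaD_pos d hα).le hs.le, ← rpow_mul hs.le]
  have hexp : p + 2 / α * ((d : ℝ) / 2 - p * (d + α) / 2) = -((p - 1) * d / α) := by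
    field_simp
    ring
  rw [← hexp, rpow_add hs]
  ring

theorem g_pow_timespace_integral_value_general
    (d : ℕ) (α : ℝ) (hα : α ∈ Set.Ioo (0:ℝ) 2)
    (p : ℝ) (hp : p ∈ Set.Ioo ((d:ℝ) / ((d:ℝ) + α)) (1 + α / d)) (t : ℝ) (ht : 0 < t) :
    (∫ s in (0:ℝ)..t, ∫ y : EuclideanSpace ℝ (Fin d), gKer d α s y ^ p)
      = kappaD d α ^ p * Real.pi ^ ((d:ℝ)/2) / (1 - (p - 1) * d / α) *
          (Real.Gamma (p * ((d:ℝ) + α) / 2 - (d:ℝ) / 2) / Real.Gamma (p * ((d:ℝ) + α) / 2)) *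
          t ^ (1 - (p - 1) * d / α) := by
  have hα0 : 0 < α := hα.1
  have hpd : (p - 1) * d < α := by
    rcases (Nat.cast_nonneg (α := ℝ) d).eq_or_lt with hd | hd
    · simpa [← hd] using hα0
    · exact (lt_div_iff₀ hd).1 (by linarith [hp.2])
  have hexp : -1 < -((p - 1) * d / α) := by
    rw [neg_lt_neg_iff, div_lt_one hα0]
    exact hpd
  rw [intervalIntegral.integral_congr_ae (Filter.Eventually.of_forall fun s hs =>
      integral_gKer_rpow d hα0 hp.1 (by rw [uIoc_of_le ht.le] at hs; exact hs.1)),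
    intervalIntegral.integral_const_mul, integral_rpow (Or.inl hexp),
    zero_rpow (by linarith), sub_zero, neg_add_eq_sub]
  ring

/-- exact value of `∫₀^t ∫ g(s,y)^p dy ds`. -/
theorem g_pow_timespace_integral_value
    (d : ℕ) (hd : 1 ≤ d) (α : ℝ) (hα : α ∈ Set.Ioo (0:ℝ) 2)
    (p : ℝ) (hp : p ∈ Set.Ioo ((d:ℝ) / ((d:ℝ) + α)) (1 + α / d)) (t : ℝ) (ht : 0 < t) :
    (∫ s in (0:ℝ)..t, ∫ y : EuclideanSpace ℝ (Fin d), gKer d α s y ^ p)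
      = kappaD d α ^ p * Real.pi ^ ((d:ℝ)/2) / (1 - (p - 1) * d / α) *
          (Real.Gamma (p * ((d:ℝ) + α) / 2 - (d:ℝ) / 2) / Real.Gamma (p * ((d:ℝ) + α) / 2)) *
          t ^ (1 - (p - 1) * d / α) :=
  g_pow_timespace_integral_value_general d α hα p hp t ht
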